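/- Let (M, 𝒜, μ) be a finite measure space, X = L²(μ) the real Hilbert space with inner product ⟪f,g⟫ = ∫ f·g dμ, and J : X → ℝ absolutely one-homogeneous. Suppose C ⊆ M is measurable and C is an eigenset of J with eigenvalue λ and ratio β > 0. Then for every measurable set D with C ⊆ D ⊆ M, one has λ·(μ(C) − β·(μ(D) − μ(C))) ≤ J(χ_D). (Intermediate inequality from the proof of the paper's main Theorem: testing the eigenset subgradient against the indicator of any superset.) -/

import Mathlib

open MeasureTheory RealInnerProductSpace

/-- `p` is a subgradient of `J` at `u`. -/
def IsSubgradientAt {X : Type*} [NormedAddCommGroup X] [InnerProductSpace ℝ X]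
    (J : X → ℝ) (p u : X) : Prop :=
  ∀ v : X, J v ≥ J u + ⟪p, v - u⟫

/-- The indicator function of a measurable set as an element of `L²(μ)`. -/
noncomputable def chi {M : Type*} [MeasurableSpace M] (μ : Measure M) [IsFiniteMeasure μ]
    {C : Set M} (hC : MeasurableSet C) : Lp ℝ 2 μ :=
  indicatorConstLp 2 hC (measure_ne_top μ C) (1 : ℝ)

/-- `C` is an eigenset of `J` with eigenvalue `lam` and ratio `β > 0`:
`ψ := χ_C − β • χ_{M \ C}` satisfies that `lam • ψ` is a subgradient of `J` at `ψ`. -/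
def IsEigenset {M : Type*} [MeasurableSpace M] (μ : Measure M) [IsFiniteMeasure μ]
    (J : Lp ℝ 2 μ → ℝ) {C : Set M} (hC : MeasurableSet C) (lam β : ℝ) : Prop :=
  0 < β ∧ IsSubgradientAt J
    (lam • (chi μ hC - β • chi μ hC.compl)) (chi μ hC - β • chi μ hC.compl)

/- Testing the subgradient inequality at `2 • u` gives `⟪p, u⟫ ≤ J u`, which removes the base
point from the inequality. -/
theorem IsSubgradientAt.inner_le_of_abs_homogeneous {X : Type*} [NormedAddCommGroup X]
    [InnerProductSpace ℝ X] {J : X → ℝ} (hhom : ∀ (α : ℝ) (u : X), J (α • u) = |α| * J u)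
    {p u : X} (hp : IsSubgradientAt J p u) (v : X) : ⟪p, v⟫ ≤ J v := by
  have h_at_two : J ((2 : ℝ) • u) ≥ J u + ⟪p, (2 : ℝ) • u - u⟫ := hp _
  rw [hhom, abs_two, two_smul, add_sub_cancel_right] at h_at_two
  have h_at_v := hp v
  rw [inner_sub_right] at h_at_v
  linarith

section Indicators

variable {M : Type*} [MeasurableSpace M] (μ : Measure M) [IsFiniteMeasure μ]

theorem inner_chi_chi {S T : Set M} (hS : MeasurableSet S) (hT : MeasurableSet T) :
    ⟪chi μ hS, chi μ hT⟫ = μ.real (S ∩ T) :=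
  L2.inner_indicatorConstLp_one_indicatorConstLp_one hS hT

theorem inner_chi_sub_smul_chi_compl_chi_of_subset {C D : Set M} (hC : MeasurableSet C)
    (hD : MeasurableSet D) (hCD : C ⊆ D) (β : ℝ) :
    ⟪chi μ hC - β • chi μ hC.compl, chi μ hD⟫ = μ.real C - β * (μ.real D - μ.real C) := by
  rw [inner_sub_left, real_inner_smul_left, inner_chi_chi, inner_chi_chi,
    Set.inter_eq_left.mpr hCD, Set.inter_comm, ← Set.sdiff_eq, measureReal_sdiff hCD hC]

end Indicators

/-- Intermediate inequality: testing the eigenset subgradient against the indicator of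
any measurable superset `D ⊇ C` gives
`λ·(μ(C) − β·(μ(D) − μ(C))) ≤ J(χ_D)`. -/
theorem eigenset_superset_inequality
    {M : Type*} [MeasurableSpace M] (μ : Measure M) [IsFiniteMeasure μ]
    (J : Lp ℝ 2 μ → ℝ)
    (hhom : ∀ (α : ℝ) (u : Lp ℝ 2 μ), J (α • u) = |α| * J u)
    {C : Set M} (hC : MeasurableSet C)
    (lam β : ℝ)
    (heig : IsEigenset μ J hC lam β) :
    ∀ (D : Set M) (hD : MeasurableSet D), C ⊆ D →
      lam * ((μ C).toReal - β * ((μ D).toReal - (μ C).toReal)) ≤ J (chi μ hD) := by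
  intro D hD hCD
  have h := heig.2.inner_le_of_abs_homogeneous hhom (chi μ hD)
  rwa [real_inner_smul_left, inner_chi_sub_smul_chi_compl_chi_of_subset μ hC hD hCD] at h
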